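/- For every real a > 0, the triples T = (a, √(a² + 1/a²), 1/a) and T' = (a, 1/a, √(a² + 1/a²)) belong to the non-obtuse part X_{1/2}^no of the edge model of triangles of area 1/2, and d(T, T') = ½·log(1 + a⁴). Moreover, the function a ↦ ½·log(1 + a⁴) is strictly increasing (hence injective) on (0,∞), so distinct values of a give distinct distances. -/
import Mathlib


open Set Filter

noncomputable section

/-- The edge model `X_A`: triples of positive reals satisfying the strict triangle
inequalities and having Heron area `A`. -/
def X (A : ℝ) : Set (Fin 3 → ℝ) :=
  {a | (∀ i, 0 < a i) ∧
    (∀ i j k : Fin 3, i ≠ j → j ≠ k → i ≠ k → a i < a j + a k) ∧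
    Real.sqrt ((a 0 + a 1 + a 2) * (-a 0 + a 1 + a 2) *
      (a 0 - a 1 + a 2) * (a 0 + a 1 - a 2)) / 4 = A}

/-- The non-obtuse part `X_A^no`. -/
def XNo (A : ℝ) : Set (Fin 3 → ℝ) :=
  {a | a ∈ X A ∧ ∀ i j k : Fin 3, i ≠ j → j ≠ k → i ≠ k → a i ^ 2 ≤ a j ^ 2 + a k ^ 2}

/-- The acute part `X_A^ac`. -/
def XAc (A : ℝ) : Set (Fin 3 → ℝ) :=
  {a | a ∈ X A ∧ ∀ i j k : Fin 3, i ≠ j → j ≠ k → i ≠ k → a i ^ 2 < a j ^ 2 + a k ^ 2}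

/-- The distance `d(a,b) = max_i |log a_i - log b_i|` on the edge model. -/
def dd (a b : Fin 3 → ℝ) : ℝ :=
  max |Real.log (a 0) - Real.log (b 0)|
    (max |Real.log (a 1) - Real.log (b 1)| |Real.log (a 2) - Real.log (b 2)|)

/-- The angle at vertex `i` of the triangle with edge lengths `a`, by the law of cosines. -/
def thetaA (a : Fin 3 → ℝ) (i : Fin 3) : ℝ :=
  Real.arccos ((a (i + 1) ^ 2 + a (i + 2) ^ 2 - a i ^ 2) / (2 * a (i + 1) * a (i + 2)))

theorem forall3aux {P : Fin 3 → Fin 3 → Fin 3 → Prop}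
    (h012 : P 0 1 2) (h021 : P 0 2 1) (h102 : P 1 0 2) (h120 : P 1 2 0)
    (h201 : P 2 0 1) (h210 : P 2 1 0) :
    ∀ i j k : Fin 3, i ≠ j → j ≠ k → i ≠ k → P i j k := by
  intro i j k hij hjk hik
  fin_cases i <;> fin_cases j <;> fin_cases k <;>
    first
      | exact absurd rfl hij
      | exact absurd rfl hjk
      | exact absurd rfl hik
      | exact h012 | exact h021 | exact h102 | exact h120 | exact h201 | exact h210


set_option maxHeartbeats 1000000 in
/-- The two boundary right triangles `(a, √(a²+1/a²), 1/a)` and `(a, 1/a, √(a²+1/a²))`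
lie in `X_{1/2}^no`, their distance is `½·log(1+a⁴)`, and this quantity is strictly
increasing in `a`. -/
theorem stmt19 (a : ℝ) (ha : 0 < a) :
    (![a, Real.sqrt (a ^ 2 + 1 / a ^ 2), 1 / a] : Fin 3 → ℝ) ∈ XNo (1 / 2) ∧
    (![a, 1 / a, Real.sqrt (a ^ 2 + 1 / a ^ 2)] : Fin 3 → ℝ) ∈ XNo (1 / 2) ∧
    dd ![a, Real.sqrt (a ^ 2 + 1 / a ^ 2), 1 / a]
        ![a, 1 / a, Real.sqrt (a ^ 2 + 1 / a ^ 2)] =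
      (1 / 2) * Real.log (1 + a ^ 4) ∧
    StrictMonoOn (fun x : ℝ => (1 / 2) * Real.log (1 + x ^ 4)) (Set.Ioi 0) := by
  have ha0 : a ≠ 0 := ne_of_gt ha
  have hc : (0:ℝ) < 1 / a := by positivity
  obtain ⟨s, hsdef⟩ : ∃ s, s = Real.sqrt (a ^ 2 + 1 / a ^ 2) := ⟨_, rfl⟩
  rw [← hsdef]
  have hsum_pos : (0:ℝ) < a ^ 2 + 1 / a ^ 2 := by positivity
  have hs2 : s ^ 2 = a ^ 2 + 1 / a ^ 2 := by rw [hsdef]; exact Real.sq_sqrt hsum_pos.le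
  have h5 : (1 / a) ^ 2 = 1 / a ^ 2 := by rw [div_pow]; norm_num
  have hs : 0 < s := by rw [hsdef]; exact Real.sqrt_pos.mpr hsum_pos
  have h4 : a * (1 / a) = 1 := by field_simp
  -- triangle inequalities
  have h1 : s < a + 1 / a := by
    rw [hsdef]
    exact (Real.sqrt_lt' (by positivity)).mpr (by nlinarith [h4, h5])
  have h2 : a < s := by
    rw [hsdef]
    exact (Real.lt_sqrt ha.le).mpr (by nlinarith [pow_pos hc 2, h5])
  have h3 : 1 / a < s := by
    rw [hsdef]
    exact (Real.lt_sqrt hc.le).mpr (by nlinarith [pow_pos ha 2, h5])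
  have ht1 : a < s + 1 / a := by linarith
  have ht2 : 1 / a < a + s := by linarith
  -- Heron product
  have hprod : (a + s + 1 / a) * (-a + s + 1 / a) * (a - s + 1 / a) * (a + s - 1 / a) = 4 := by
    linear_combination (a^2 + 1/a^2 - s^2) * hs2 + 4*(a*(1/a)+1)*h4
  have hheron : Real.sqrt ((a + s + 1 / a) * (-a + s + 1 / a) * (a - s + 1 / a)
      * (a + s - 1 / a)) / 4 = 1 / 2 := by
    rw [hprod, show (4:ℝ) = 2 ^ 2 by norm_num, Real.sqrt_sq (by norm_num)]
    norm_num
  -- non-obtuse facts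
  have hno1 : s ^ 2 ≤ a ^ 2 + (1 / a) ^ 2 := by rw [hs2, h5]
  have hno2 : a ^ 2 ≤ s ^ 2 + (1 / a) ^ 2 := by nlinarith [hs2, sq_nonneg (1/a), h5]
  have hno3 : (1 / a) ^ 2 ≤ s ^ 2 + a ^ 2 := by nlinarith [hs2, sq_nonneg a, h5]
  refine ⟨⟨⟨?_, ?_, ?_⟩, ?_⟩, ⟨⟨?_, ?_, ?_⟩, ?_⟩, ?_, ?_⟩
  · intro i
    fin_cases i <;> simp <;>
      first | exact ha | exact hs | exact hc | exact inv_pos.mpr ha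
  · exact forall3aux (by show a < s + 1/a; linarith) (by show a < 1/a + s; linarith)
      (by show s < a + 1/a; linarith) (by show s < 1/a + a; linarith)
      (by show 1/a < a + s; linarith) (by show 1/a < s + a; linarith)
  · simpa using hheron
  · exact forall3aux (by show a^2 ≤ s^2 + (1/a)^2; linarith) (by show a^2 ≤ (1/a)^2 + s^2; linarith)
      (by show s^2 ≤ a^2 + (1/a)^2; linarith) (by show s^2 ≤ (1/a)^2 + a^2; linarith)
      (by show (1/a)^2 ≤ a^2 + s^2; linarith) (by show (1/a)^2 ≤ s^2 + a^2; linarith)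
  · intro i
    fin_cases i <;> simp <;>
      first | exact ha | exact hs | exact hc | exact inv_pos.mpr ha
  · exact forall3aux (by show a < 1/a + s; linarith) (by show a < s + 1/a; linarith)
      (by show 1/a < a + s; linarith) (by show 1/a < s + a; linarith)
      (by show s < a + 1/a; linarith) (by show s < 1/a + a; linarith)
  · have h6 : Real.sqrt ((a + 1 / a + s) * (-a + 1 / a + s) * (a - 1 / a + s)
        * (a + 1 / a - s)) / 4 = 1 / 2 := by
      rw [show (a + 1 / a + s) * (-a + 1 / a + s) * (a - 1 / a + s) * (a + 1 / a - s)
        = (a + s + 1 / a) * (-a + s + 1 / a) * (a - s + 1 / a) * (a + s - 1 / a) by ring]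
      exact hheron
    simpa using h6
  · exact forall3aux (by show a^2 ≤ (1/a)^2 + s^2; linarith) (by show a^2 ≤ s^2 + (1/a)^2; linarith)
      (by show (1/a)^2 ≤ a^2 + s^2; linarith) (by show (1/a)^2 ≤ s^2 + a^2; linarith)
      (by show s^2 ≤ a^2 + (1/a)^2; linarith) (by show s^2 ≤ (1/a)^2 + a^2; linarith)
  · -- distance computation
    have hlog_s : Real.log s = (1 / 2) * Real.log (a ^ 2 + 1 / a ^ 2) := by
      rw [hsdef, Real.log_sqrt hsum_pos.le]; ring
    have hlog_c : Real.log (1 / a) = -Real.log a := by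
      rw [one_div, Real.log_inv]
    have key : Real.log s - Real.log (1 / a) = (1 / 2) * Real.log (1 + a ^ 4) := by
      rw [hlog_s, hlog_c]
      have h6 : Real.log (1 + a ^ 4) = Real.log (a ^ 2 + 1 / a ^ 2) + Real.log (a ^ 2) := by
        rw [← Real.log_mul (ne_of_gt hsum_pos) (by positivity)]
        congr 1
        field_simp
        ring
      have h7 : Real.log (a ^ 2) = 2 * Real.log a := by
        rw [Real.log_pow]; norm_num
      rw [h6, h7]; ring
    have hkey_nonneg : (0:ℝ) ≤ Real.log s - Real.log (1 / a) := by
      rw [key]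
      have : (0:ℝ) ≤ Real.log (1 + a ^ 4) := Real.log_nonneg (by nlinarith [sq_nonneg (a^2)])
      linarith
    show max |Real.log a - Real.log a|
        (max |Real.log s - Real.log (1/a)| |Real.log (1/a) - Real.log s|) = _
    rw [sub_self, abs_zero, abs_sub_comm (Real.log (1/a)) (Real.log s), max_self,
      abs_of_nonneg hkey_nonneg, key, max_eq_right]
    have : (0:ℝ) ≤ Real.log (1 + a ^ 4) := Real.log_nonneg (by nlinarith [sq_nonneg (a^2)])
    linarith
  · intro x hx y hy hxy
    simp only
    have hx0 : (0:ℝ) < x := hx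
    have hy0 : (0:ℝ) < y := hy
    have hlt : Real.log (1 + x ^ 4) < Real.log (1 + y ^ 4) := by
      apply Real.log_lt_log (by positivity)
      have : x ^ 4 < y ^ 4 := by
        apply pow_lt_pow_left₀ hxy hx0.le
        norm_num
      linarith
    linarith
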